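/- arXiv:1603.09470 — 3 statements merged into one kernel-verified Lean document; each statement's English description precedes it below -/
import Mathlib

section
/- Let p : ℝ² × ℝ → ℝ be infinitely differentiable, and suppose there is a compact set K ⊂ ℝ² such that for every t ∈ ℝ the function (x,y) ↦ p(x,y,t) has support contained in K. Suppose p satisfies the Poincaré–Sobolev equation ∂²/∂t² (∂²p/∂x² + ∂²p/∂y²) + ∂²p/∂y² = 0 on ℝ² × ℝ. Then the energy E(t) := ∫_{ℝ²} ( |∂p/∂y|² + |∂²p/∂x∂t|² + |∂²p/∂y∂t|² ) dx dy is constant in t. -/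
open MeasureTheory Set Function

namespace PS11


noncomputable def pd (v : ℝ × ℝ × ℝ) (f : ℝ × ℝ × ℝ → ℝ) (q : ℝ × ℝ × ℝ) : ℝ :=
  fderiv ℝ f q v

theorem pd_contDiff {f : ℝ × ℝ × ℝ → ℝ} (hf : ContDiff ℝ (⊤ : ℕ∞) f) (v : ℝ × ℝ × ℝ) :
    ContDiff ℝ (⊤ : ℕ∞) (pd v f) :=
  (hf.fderiv_right (by simp)).clm_apply contDiff_const

theorem hasDerivAt_x {f : ℝ × ℝ × ℝ → ℝ} (hf : ContDiff ℝ (⊤ : ℕ∞) f) (x y t : ℝ) :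
    HasDerivAt (fun x' => f (x', y, t)) (pd (1,0,0) f (x,y,t)) x := by
  have h1 : HasDerivAt (fun x' : ℝ => (x', y, t)) (((1:ℝ),(0:ℝ),(0:ℝ)) : ℝ×ℝ×ℝ) x := by
    simpa using ((hasDerivAt_id x).smul_const (((1:ℝ),(0:ℝ),(0:ℝ)) : ℝ×ℝ×ℝ)).add_const
      (((0:ℝ),y,t) : ℝ×ℝ×ℝ)
  exact (hf.differentiable (by simp) (x,y,t)).hasFDerivAt.comp_hasDerivAt x h1

theorem hasDerivAt_y {f : ℝ × ℝ × ℝ → ℝ} (hf : ContDiff ℝ (⊤ : ℕ∞) f) (x y t : ℝ) :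
    HasDerivAt (fun y' => f (x, y', t)) (pd (0,1,0) f (x,y,t)) y := by
  have h1 : HasDerivAt (fun y' : ℝ => (x, y', t)) (((0:ℝ),(1:ℝ),(0:ℝ)) : ℝ×ℝ×ℝ) y := by
    simpa using ((hasDerivAt_id y).smul_const (((0:ℝ),(1:ℝ),(0:ℝ)) : ℝ×ℝ×ℝ)).add_const
      ((x,(0:ℝ),t) : ℝ×ℝ×ℝ)
  exact (hf.differentiable (by simp) (x,y,t)).hasFDerivAt.comp_hasDerivAt y h1

theorem hasDerivAt_t {f : ℝ × ℝ × ℝ → ℝ} (hf : ContDiff ℝ (⊤ : ℕ∞) f) (x y t : ℝ) :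
    HasDerivAt (fun s => f (x, y, s)) (pd (0,0,1) f (x,y,t)) t := by
  have h1 : HasDerivAt (fun s : ℝ => (x, y, s)) (((0:ℝ),(0:ℝ),(1:ℝ)) : ℝ×ℝ×ℝ) t := by
    simpa using ((hasDerivAt_id t).smul_const (((0:ℝ),(0:ℝ),(1:ℝ)) : ℝ×ℝ×ℝ)).add_const
      ((x,y,(0:ℝ)) : ℝ×ℝ×ℝ)
  exact (hf.differentiable (by simp) (x,y,t)).hasFDerivAt.comp_hasDerivAt t h1

theorem pd_apply_snd {f : ℝ × ℝ × ℝ → ℝ} (hf : ContDiff ℝ (⊤ : ℕ∞) f) (v w : ℝ × ℝ × ℝ)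
    (q : ℝ × ℝ × ℝ) : pd v (pd w f) q = fderiv ℝ (fderiv ℝ f) q v w := by
  have hdc : DifferentiableAt ℝ (fderiv ℝ f) q :=
    ((hf.fderiv_right (m := (⊤ : ℕ∞)) (by simp)).differentiable (by simp)).differentiableAt
  have : pd v (pd w f) q = fderiv ℝ (fun z => (fderiv ℝ f z) w) q v := rfl
  rw [this, fderiv_clm_apply hdc (differentiableAt_const w)]
  simp

theorem pd_swap {f : ℝ × ℝ × ℝ → ℝ} (hf : ContDiff ℝ (⊤ : ℕ∞) f) (v w : ℝ × ℝ × ℝ) :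
    pd v (pd w f) = pd w (pd v f) := by
  funext q
  have hs : IsSymmSndFDerivAt ℝ f q := (hf.contDiffAt).isSymmSndFDerivAt (by simp; exact WithTop.coe_le_coe.2 le_top)
  rw [pd_apply_snd hf v w, pd_apply_snd hf w v, hs v w]

theorem pd_add {f g : ℝ × ℝ × ℝ → ℝ} (hf : ContDiff ℝ (⊤ : ℕ∞) f) (hg : ContDiff ℝ (⊤ : ℕ∞) g)
    (v : ℝ × ℝ × ℝ) (q : ℝ × ℝ × ℝ) :
    pd v (fun z => f z + g z) q = pd v f q + pd v g q := by
  unfold pd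
  rw [fderiv_fun_add (hf.differentiable (by simp)).differentiableAt
    (hg.differentiable (by simp)).differentiableAt]
  rfl

def ZK (K : Set (ℝ × ℝ)) (f : ℝ × ℝ × ℝ → ℝ) : Prop :=
  ∀ q : ℝ × ℝ × ℝ, (q.1, q.2.1) ∉ K → f q = 0

variable {K : Set (ℝ × ℝ)}

theorem ZK.mul_left {f g : ℝ × ℝ × ℝ → ℝ} (hf : ZK K f) : ZK K (fun z => f z * g z) :=
  fun q hq => by show f q * g q = 0; rw [hf q hq, zero_mul]

theorem zk_pd (hKc : IsClosed K) {f : ℝ × ℝ × ℝ → ℝ} (hf : ZK K f) (v : ℝ × ℝ × ℝ) :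
    ZK K (pd v f) := by
  intro q hq
  have hopen : IsOpen {z : ℝ × ℝ × ℝ | (z.1, z.2.1) ∉ K} := by
    have : Continuous fun z : ℝ × ℝ × ℝ => (z.1, z.2.1) := by fun_prop
    exact hKc.isOpen_compl.preimage this
  have hev : f =ᶠ[nhds q] (fun _ => (0:ℝ)) :=
    Filter.eventually_of_mem (hopen.mem_nhds hq) (fun z hz => hf z hz)
  unfold pd
  rw [hev.fderiv_eq, fderiv_fun_const]
  simp

theorem integrable2 {f : ℝ × ℝ × ℝ → ℝ} (hf : ContDiff ℝ (⊤ : ℕ∞) f) (hZ : ZK K f)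
    (hK : IsCompact K) (t : ℝ) :
    Integrable (fun q : ℝ × ℝ => f (q.1, q.2, t)) := by
  apply Continuous.integrable_of_hasCompactSupport
  · exact hf.continuous.comp (by fun_prop)
  · exact HasCompactSupport.intro hK (fun q hq => hZ (q.1, q.2, t) (by simpa using hq))

theorem integrable_x {f : ℝ × ℝ × ℝ → ℝ} (hf : ContDiff ℝ (⊤ : ℕ∞) f) (hZ : ZK K f)
    (hK : IsCompact K) (y t : ℝ) :
    Integrable (fun x => f (x, y, t)) := by
  apply Continuous.integrable_of_hasCompactSupport
  · exact hf.continuous.comp (by fun_prop)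
  · exact HasCompactSupport.intro (hK.image continuous_fst)
      (fun x hx => hZ (x, y, t) (fun hmem => hx ⟨(x,y), hmem, rfl⟩))

theorem integrable_y {f : ℝ × ℝ × ℝ → ℝ} (hf : ContDiff ℝ (⊤ : ℕ∞) f) (hZ : ZK K f)
    (hK : IsCompact K) (x t : ℝ) :
    Integrable (fun y => f (x, y, t)) := by
  apply Continuous.integrable_of_hasCompactSupport
  · exact hf.continuous.comp (by fun_prop)
  · exact HasCompactSupport.intro (hK.image continuous_snd)
      (fun y hy => hZ (x, y, t) (fun hmem => hy ⟨(x,y), hmem, rfl⟩))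

theorem ibp_y {f g : ℝ × ℝ × ℝ → ℝ} (hf : ContDiff ℝ (⊤ : ℕ∞) f) (hg : ContDiff ℝ (⊤ : ℕ∞) g)
    (hZf : ZK K f) (hK : IsCompact K) (x t : ℝ) :
    ∫ y, f (x,y,t) * pd (0,1,0) g (x,y,t) = -∫ y, pd (0,1,0) f (x,y,t) * g (x,y,t) := by
  refine integral_mul_deriv_eq_deriv_mul_of_integrable
    (fun y _ => hasDerivAt_y hf x y t) (fun y _ => hasDerivAt_y hg x y t) ?_ ?_ ?_
  · exact integrable_y (hf.mul (pd_contDiff hg _)) hZf.mul_left hK x t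
  · exact integrable_y ((pd_contDiff hf _).mul hg) ((zk_pd hK.isClosed hZf _).mul_left) hK x t
  · exact integrable_y (hf.mul hg) hZf.mul_left hK x t

theorem ibp_x {f g : ℝ × ℝ × ℝ → ℝ} (hf : ContDiff ℝ (⊤ : ℕ∞) f) (hg : ContDiff ℝ (⊤ : ℕ∞) g)
    (hZf : ZK K f) (hK : IsCompact K) (y t : ℝ) :
    ∫ x, f (x,y,t) * pd (1,0,0) g (x,y,t) = -∫ x, pd (1,0,0) f (x,y,t) * g (x,y,t) := by
  refine integral_mul_deriv_eq_deriv_mul_of_integrable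
    (fun x _ => hasDerivAt_x hf x y t) (fun x _ => hasDerivAt_x hg x y t) ?_ ?_ ?_
  · exact integrable_x (hf.mul (pd_contDiff hg _)) hZf.mul_left hK y t
  · exact integrable_x ((pd_contDiff hf _).mul hg) ((zk_pd hK.isClosed hZf _).mul_left) hK y t
  · exact integrable_x (hf.mul hg) hZf.mul_left hK y t

theorem ibp2_y {f g : ℝ × ℝ × ℝ → ℝ} (hf : ContDiff ℝ (⊤ : ℕ∞) f) (hg : ContDiff ℝ (⊤ : ℕ∞) g)
    (hZf : ZK K f) (hK : IsCompact K) (t : ℝ) :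
    ∫ q : ℝ × ℝ, f (q.1,q.2,t) * pd (0,1,0) g (q.1,q.2,t)
      = -∫ q : ℝ × ℝ, pd (0,1,0) f (q.1,q.2,t) * g (q.1,q.2,t) := by
  have h1 : Integrable (fun q : ℝ × ℝ => f (q.1,q.2,t) * pd (0,1,0) g (q.1,q.2,t)) :=
    integrable2 (hf.mul (pd_contDiff hg _)) hZf.mul_left hK t
  have h2 : Integrable (fun q : ℝ × ℝ => pd (0,1,0) f (q.1,q.2,t) * g (q.1,q.2,t)) :=
    integrable2 ((pd_contDiff hf _).mul hg) ((zk_pd hK.isClosed hZf _).mul_left) hK t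
  rw [Measure.volume_eq_prod] at h1 h2
  rw [Measure.volume_eq_prod, integral_prod _ h1, integral_prod _ h2, ← integral_neg]
  exact integral_congr_ae (Filter.Eventually.of_forall fun x => by
    simpa using ibp_y hf hg hZf hK x t)

theorem ibp2_x {f g : ℝ × ℝ × ℝ → ℝ} (hf : ContDiff ℝ (⊤ : ℕ∞) f) (hg : ContDiff ℝ (⊤ : ℕ∞) g)
    (hZf : ZK K f) (hK : IsCompact K) (t : ℝ) :
    ∫ q : ℝ × ℝ, f (q.1,q.2,t) * pd (1,0,0) g (q.1,q.2,t)
      = -∫ q : ℝ × ℝ, pd (1,0,0) f (q.1,q.2,t) * g (q.1,q.2,t) := by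
  have h1 : Integrable (fun q : ℝ × ℝ => f (q.1,q.2,t) * pd (1,0,0) g (q.1,q.2,t)) :=
    integrable2 (hf.mul (pd_contDiff hg _)) hZf.mul_left hK t
  have h2 : Integrable (fun q : ℝ × ℝ => pd (1,0,0) f (q.1,q.2,t) * g (q.1,q.2,t)) :=
    integrable2 ((pd_contDiff hf _).mul hg) ((zk_pd hK.isClosed hZf _).mul_left) hK t
  rw [Measure.volume_eq_prod] at h1 h2
  rw [Measure.volume_eq_prod, integral_prod_symm _ h1, integral_prod_symm _ h2, ← integral_neg]
  exact integral_congr_ae (Filter.Eventually.of_forall fun y => by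
    simpa using ibp_x hf hg hZf hK y t)

/-- commuting `x`-derivatives past `t`-derivatives -/
theorem key_swap1 {f : ℝ × ℝ × ℝ → ℝ} (hf : ContDiff ℝ (⊤ : ℕ∞) f) :
    pd (1,0,0) (pd (1,0,0) (pd (0,0,1) (pd (0,0,1) f)))
      = pd (0,0,1) (pd (0,0,1) (pd (1,0,0) (pd (1,0,0) f))) := by
  have hg : ContDiff ℝ (⊤ : ℕ∞) (pd (0,0,1) f) := pd_contDiff hf _
  rw [pd_swap hg (1,0,0) (0,0,1), pd_swap (pd_contDiff hg (1,0,0)) (1,0,0) (0,0,1),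
    pd_swap hf (1,0,0) (0,0,1), pd_swap (pd_contDiff hf (1,0,0)) (1,0,0) (0,0,1)]

theorem key_swap2 {f : ℝ × ℝ × ℝ → ℝ} (hf : ContDiff ℝ (⊤ : ℕ∞) f) :
    pd (0,1,0) (pd (0,1,0) (pd (0,0,1) (pd (0,0,1) f)))
      = pd (0,0,1) (pd (0,0,1) (pd (0,1,0) (pd (0,1,0) f))) := by
  have hg : ContDiff ℝ (⊤ : ℕ∞) (pd (0,0,1) f) := pd_contDiff hf _
  rw [pd_swap hg (0,1,0) (0,0,1), pd_swap (pd_contDiff hg (0,1,0)) (0,1,0) (0,0,1),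
    pd_swap hf (0,1,0) (0,0,1), pd_swap (pd_contDiff hf (0,1,0)) (0,1,0) (0,0,1)]

noncomputable def Gfun (f : ℝ × ℝ × ℝ → ℝ) (z : ℝ × ℝ × ℝ) : ℝ :=
  2 * pd (0,1,0) f z * pd (0,0,1) (pd (0,1,0) f) z
    + 2 * pd (0,0,1) (pd (1,0,0) f) z * pd (0,0,1) (pd (0,0,1) (pd (1,0,0) f)) z
    + 2 * pd (0,0,1) (pd (0,1,0) f) z * pd (0,0,1) (pd (0,0,1) (pd (0,1,0) f)) z

theorem Gfun_contDiff {f : ℝ × ℝ × ℝ → ℝ} (hf : ContDiff ℝ (⊤ : ℕ∞) f) :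
    ContDiff ℝ (⊤ : ℕ∞) (Gfun f) := by
  unfold Gfun
  exact (((contDiff_const.mul (pd_contDiff hf _)).mul (pd_contDiff (pd_contDiff hf _) _)).add
    ((contDiff_const.mul (pd_contDiff (pd_contDiff hf _) _)).mul
      (pd_contDiff (pd_contDiff (pd_contDiff hf _) _) _))).add
    ((contDiff_const.mul (pd_contDiff (pd_contDiff hf _) _)).mul
      (pd_contDiff (pd_contDiff (pd_contDiff hf _) _) _))

theorem Gfun_zk (hKc : IsClosed K) {f : ℝ × ℝ × ℝ → ℝ} (hZ : ZK K f) : ZK K (Gfun f) := by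
  intro q hq
  have h1 : pd (0,1,0) f q = 0 := zk_pd hKc hZ _ q hq
  have h2 : pd (0,0,1) (pd (1,0,0) f) q = 0 := zk_pd hKc (zk_pd hKc hZ _) _ q hq
  have h3 : pd (0,0,1) (pd (0,1,0) f) q = 0 := zk_pd hKc (zk_pd hKc hZ _) _ q hq
  simp only [Gfun, h1, h2, h3]
  ring

theorem energy_zk (hKc : IsClosed K) {f : ℝ × ℝ × ℝ → ℝ} (hZ : ZK K f) :
    ZK K (fun z => (pd (0,1,0) f z)^2 + (pd (0,0,1) (pd (1,0,0) f) z)^2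
      + (pd (0,0,1) (pd (0,1,0) f) z)^2) := by
  intro q hq
  have h1 : pd (0,1,0) f q = 0 := zk_pd hKc hZ _ q hq
  have h2 : pd (0,0,1) (pd (1,0,0) f) q = 0 := zk_pd hKc (zk_pd hKc hZ _) _ q hq
  have h3 : pd (0,0,1) (pd (0,1,0) f) q = 0 := zk_pd hKc (zk_pd hKc hZ _) _ q hq
  simp only [h1, h2, h3]
  ring

theorem hasDerivAt_E {f : ℝ × ℝ × ℝ → ℝ} (hf : ContDiff ℝ (⊤ : ℕ∞) f) (hZ : ZK K f)
    (hK : IsCompact K) (t₀ : ℝ) :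
    HasDerivAt (fun t => ∫ q : ℝ × ℝ, ((pd (0,1,0) f (q.1,q.2,t))^2
        + (pd (0,0,1) (pd (1,0,0) f) (q.1,q.2,t))^2
        + (pd (0,0,1) (pd (0,1,0) f) (q.1,q.2,t))^2))
      (∫ q : ℝ × ℝ, Gfun f (q.1,q.2,t₀)) t₀ := by
  have hGsm := Gfun_contDiff hf
  have hGzk := Gfun_zk hK.isClosed hZ
  have ct : ∀ t : ℝ, Continuous fun q : ℝ × ℝ => (q.1, q.2, t) := fun t => by fun_prop
  obtain ⟨C, hC⟩ := (hK.prod (isCompact_closedBall t₀ 1)).exists_bound_of_continuousOn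
    (Continuous.continuousOn (hGsm.continuous.comp
      (show Continuous fun w : (ℝ × ℝ) × ℝ => (w.1.1, w.1.2, w.2) by fun_prop)))
  refine (hasDerivAt_integral_of_dominated_loc_of_deriv_le (s := Metric.ball t₀ 1)
    (F' := fun t (q : ℝ × ℝ) => Gfun f (q.1, q.2, t))
    (bound := K.indicator fun _ => C) (Metric.ball_mem_nhds t₀ one_pos) ?_ ?_ ?_ ?_ ?_ ?_).2
  · refine Filter.Eventually.of_forall fun t => Continuous.aestronglyMeasurable ?_
    exact ((((pd_contDiff hf _).continuous.comp (ct t)).pow 2).add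
      (((pd_contDiff (pd_contDiff hf _) _).continuous.comp (ct t)).pow 2)).add
      (((pd_contDiff (pd_contDiff hf _) _).continuous.comp (ct t)).pow 2)
  · exact integrable2 (((pd_contDiff hf _).pow 2).add
      (((pd_contDiff (pd_contDiff hf _) _).pow 2)) |>.add
      ((pd_contDiff (pd_contDiff hf _) _).pow 2)) (energy_zk hK.isClosed hZ) hK t₀
  · exact (hGsm.continuous.comp (ct t₀)).aestronglyMeasurable
  · refine Filter.Eventually.of_forall fun q => fun t ht => ?_
    by_cases hq : q ∈ K
    · rw [Set.indicator_of_mem hq]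
      simpa using hC (q, t) ⟨hq, Metric.ball_subset_closedBall ht⟩
    · rw [Set.indicator_of_notMem hq]
      have h0 : Gfun f (q.1, q.2, t) = 0 := hGzk (q.1, q.2, t) (by simpa using hq)
      simp [h0]
  · rw [integrable_indicator_iff hK.isClosed.measurableSet]
    exact integrableOn_const hK.measure_lt_top.ne
  · refine Filter.Eventually.of_forall fun q => fun t ht => ?_
    have Ha := (hasDerivAt_t (pd_contDiff hf (0,1,0)) q.1 q.2 t).pow 2
    have Hb := (hasDerivAt_t (pd_contDiff (pd_contDiff hf (1,0,0)) (0,0,1)) q.1 q.2 t).pow 2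
    have Hc := (hasDerivAt_t (pd_contDiff (pd_contDiff hf (0,1,0)) (0,0,1)) q.1 q.2 t).pow 2
    have H := (Ha.add Hb).add Hc
    convert H using 1
    · rfl
    simp only [Gfun, pow_one, Nat.cast_ofNat]
    ring

theorem integral_G_zero {f : ℝ × ℝ × ℝ → ℝ} (hf : ContDiff ℝ (⊤ : ℕ∞) f) (hZ : ZK K f)
    (hK : IsCompact K)
    (hPDE : ∀ z, pd (0,1,0) (pd (0,1,0) f) z
      + (pd (0,0,1) (pd (0,0,1) (pd (1,0,0) (pd (1,0,0) f))) z
        + pd (0,0,1) (pd (0,0,1) (pd (0,1,0) (pd (0,1,0) f))) z) = 0)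
    (t₀ : ℝ) :
    ∫ q : ℝ × ℝ, Gfun f (q.1,q.2,t₀) = 0 := by
  have hKc := hK.isClosed
  have hgg : ContDiff ℝ (⊤ : ℕ∞) (pd (0,0,1) f) := pd_contDiff hf _
  have hhh : ContDiff ℝ (⊤ : ℕ∞) (pd (0,0,1) (pd (0,0,1) f)) := pd_contDiff hgg _
  have hZgg : ZK K (pd (0,0,1) f) := zk_pd hKc hZ _
  have hZhh : ZK K (pd (0,0,1) (pd (0,0,1) f)) := zk_pd hKc hZgg _
  -- rewrite Gfun into IBP-ready form
  have hB' : pd (0,0,1) (pd (0,0,1) (pd (1,0,0) f))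
      = pd (1,0,0) (pd (0,0,1) (pd (0,0,1) f)) := by
    rw [pd_swap hf (0,0,1) (1,0,0)]
    · rw [pd_swap hgg (0,0,1) (1,0,0)]
  have hC' : pd (0,0,1) (pd (0,0,1) (pd (0,1,0) f))
      = pd (0,1,0) (pd (0,0,1) (pd (0,0,1) f)) := by
    rw [pd_swap hf (0,0,1) (0,1,0), pd_swap hgg (0,0,1) (0,1,0)]
  have hA : pd (0,0,1) (pd (0,1,0) f) = pd (0,1,0) (pd (0,0,1) f) := pd_swap hf _ _
  have hB : pd (0,0,1) (pd (1,0,0) f) = pd (1,0,0) (pd (0,0,1) f) := pd_swap hf _ _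
  have hGeq : ∀ z, Gfun f z =
      2 * (pd (0,1,0) f z * pd (0,1,0) (pd (0,0,1) f) z)
      + 2 * (pd (1,0,0) (pd (0,0,1) (pd (0,0,1) f)) z * pd (1,0,0) (pd (0,0,1) f) z)
      + 2 * (pd (0,1,0) (pd (0,0,1) (pd (0,0,1) f)) z * pd (0,1,0) (pd (0,0,1) f) z) := by
    intro z
    unfold Gfun
    rw [hB', hC', hA, hB]
    ring
  -- integrability of all six products
  have i1 : Integrable (fun q : ℝ × ℝ =>
      pd (0,1,0) f (q.1,q.2,t₀) * pd (0,1,0) (pd (0,0,1) f) (q.1,q.2,t₀)) :=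
    integrable2 ((pd_contDiff hf _).mul (pd_contDiff hgg _)) ((zk_pd hKc hZ _).mul_left) hK t₀
  have i2 : Integrable (fun q : ℝ × ℝ =>
      pd (1,0,0) (pd (0,0,1) (pd (0,0,1) f)) (q.1,q.2,t₀)
        * pd (1,0,0) (pd (0,0,1) f) (q.1,q.2,t₀)) :=
    integrable2 ((pd_contDiff hhh _).mul (pd_contDiff hgg _)) ((zk_pd hKc hZhh _).mul_left) hK t₀
  have i3 : Integrable (fun q : ℝ × ℝ =>
      pd (0,1,0) (pd (0,0,1) (pd (0,0,1) f)) (q.1,q.2,t₀)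
        * pd (0,1,0) (pd (0,0,1) f) (q.1,q.2,t₀)) :=
    integrable2 ((pd_contDiff hhh _).mul (pd_contDiff hgg _)) ((zk_pd hKc hZhh _).mul_left) hK t₀
  have j1 : Integrable (fun q : ℝ × ℝ =>
      pd (0,1,0) (pd (0,1,0) f) (q.1,q.2,t₀) * pd (0,0,1) f (q.1,q.2,t₀)) :=
    integrable2 ((pd_contDiff (pd_contDiff hf _) _).mul hgg)
      ((zk_pd hKc (zk_pd hKc hZ _) _).mul_left) hK t₀
  have j2 : Integrable (fun q : ℝ × ℝ =>
      pd (1,0,0) (pd (1,0,0) (pd (0,0,1) (pd (0,0,1) f))) (q.1,q.2,t₀)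
        * pd (0,0,1) f (q.1,q.2,t₀)) :=
    integrable2 ((pd_contDiff (pd_contDiff hhh _) _).mul hgg)
      ((zk_pd hKc (zk_pd hKc hZhh _) _).mul_left) hK t₀
  have j3 : Integrable (fun q : ℝ × ℝ =>
      pd (0,1,0) (pd (0,1,0) (pd (0,0,1) (pd (0,0,1) f))) (q.1,q.2,t₀)
        * pd (0,0,1) f (q.1,q.2,t₀)) :=
    integrable2 ((pd_contDiff (pd_contDiff hhh _) _).mul hgg)
      ((zk_pd hKc (zk_pd hKc hZhh _) _).mul_left) hK t₀
  -- IBP identities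
  have e1 : ∫ q : ℝ × ℝ, pd (0,1,0) f (q.1,q.2,t₀) * pd (0,1,0) (pd (0,0,1) f) (q.1,q.2,t₀)
      = -∫ q : ℝ × ℝ, pd (0,1,0) (pd (0,1,0) f) (q.1,q.2,t₀) * pd (0,0,1) f (q.1,q.2,t₀) :=
    ibp2_y (pd_contDiff hf _) hgg (zk_pd hKc hZ _) hK t₀
  have e2 : ∫ q : ℝ × ℝ, pd (1,0,0) (pd (0,0,1) (pd (0,0,1) f)) (q.1,q.2,t₀)
        * pd (1,0,0) (pd (0,0,1) f) (q.1,q.2,t₀)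
      = -∫ q : ℝ × ℝ, pd (1,0,0) (pd (1,0,0) (pd (0,0,1) (pd (0,0,1) f))) (q.1,q.2,t₀)
        * pd (0,0,1) f (q.1,q.2,t₀) :=
    ibp2_x (pd_contDiff hhh _) hgg (zk_pd hKc hZhh _) hK t₀
  have e3 : ∫ q : ℝ × ℝ, pd (0,1,0) (pd (0,0,1) (pd (0,0,1) f)) (q.1,q.2,t₀)
        * pd (0,1,0) (pd (0,0,1) f) (q.1,q.2,t₀)
      = -∫ q : ℝ × ℝ, pd (0,1,0) (pd (0,1,0) (pd (0,0,1) (pd (0,0,1) f))) (q.1,q.2,t₀)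
        * pd (0,0,1) f (q.1,q.2,t₀) :=
    ibp2_y (pd_contDiff hhh _) hgg (zk_pd hKc hZhh _) hK t₀
  -- sum of right-hand sides vanishes by the PDE
  have hzero : ∀ z : ℝ × ℝ × ℝ,
      pd (0,1,0) (pd (0,1,0) f) z * pd (0,0,1) f z
      + pd (1,0,0) (pd (1,0,0) (pd (0,0,1) (pd (0,0,1) f))) z * pd (0,0,1) f z
      + pd (0,1,0) (pd (0,1,0) (pd (0,0,1) (pd (0,0,1) f))) z * pd (0,0,1) f z = 0 := by
    intro z
    rw [key_swap1 hf, key_swap2 hf]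
    linear_combination (pd (0,0,1) f z) * hPDE z
  have htot : (∫ q : ℝ × ℝ, pd (0,1,0) (pd (0,1,0) f) (q.1,q.2,t₀) * pd (0,0,1) f (q.1,q.2,t₀))
      + (∫ q : ℝ × ℝ, pd (1,0,0) (pd (1,0,0) (pd (0,0,1) (pd (0,0,1) f))) (q.1,q.2,t₀)
          * pd (0,0,1) f (q.1,q.2,t₀))
      + (∫ q : ℝ × ℝ, pd (0,1,0) (pd (0,1,0) (pd (0,0,1) (pd (0,0,1) f))) (q.1,q.2,t₀)
          * pd (0,0,1) f (q.1,q.2,t₀)) = 0 := by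
    have h := integral_add (j1.add j2) j3
    simp only [Pi.add_apply] at h
    rw [integral_add j1 j2] at h
    rw [← h]
    simp only [hzero]
    simp
  -- put everything together
  have hsplit : (fun q : ℝ × ℝ => Gfun f (q.1,q.2,t₀)) = fun q : ℝ × ℝ =>
      2 * (pd (0,1,0) f (q.1,q.2,t₀) * pd (0,1,0) (pd (0,0,1) f) (q.1,q.2,t₀))
      + 2 * (pd (1,0,0) (pd (0,0,1) (pd (0,0,1) f)) (q.1,q.2,t₀)
          * pd (1,0,0) (pd (0,0,1) f) (q.1,q.2,t₀))
      + 2 * (pd (0,1,0) (pd (0,0,1) (pd (0,0,1) f)) (q.1,q.2,t₀)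
          * pd (0,1,0) (pd (0,0,1) f) (q.1,q.2,t₀)) :=
    funext fun q => hGeq (q.1,q.2,t₀)
  have h := integral_add ((i1.const_mul 2).add (i2.const_mul 2)) (i3.const_mul 2)
  simp only [Pi.add_apply] at h
  rw [integral_add (i1.const_mul 2) (i2.const_mul 2)] at h
  rw [hsplit, h, integral_const_mul, integral_const_mul, integral_const_mul, e1, e2, e3]
  linarith [htot]

theorem iterDeriv_two (f : ℝ → ℝ) (x : ℝ) : iteratedDeriv 2 f x = deriv (deriv f) x := by
  rw [show (2:ℕ) = 1 + 1 from rfl, iteratedDeriv_succ, iteratedDeriv_one]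


end PS11

open PS11 in
/-- Conservation of energy for smooth, spatially compactly supported solutions of the
Poincaré–Sobolev equation `∂ₜ²(p_xx + p_yy) + p_yy = 0` on `ℝ² × ℝ`: the energy
`E(t) = ∫_{ℝ²} (|p_y|² + |p_xt|² + |p_yt|²) dx dy` is constant in `t`. -/
theorem statement_11 (p : ℝ → ℝ → ℝ → ℝ)
    (hsm : ContDiff ℝ (⊤ : ℕ∞) (fun q : ℝ × ℝ × ℝ => p q.1 q.2.1 q.2.2))
    (K : Set (ℝ × ℝ)) (hK : IsCompact K)
    (hsupp : ∀ t : ℝ, Function.support (fun q : ℝ × ℝ => p q.1 q.2 t) ⊆ K)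
    (hpde : ∀ x y t : ℝ,
      iteratedDeriv 2 (fun s =>
          iteratedDeriv 2 (fun x' => p x' y s) x + iteratedDeriv 2 (fun y' => p x y' s) y) t
        + iteratedDeriv 2 (fun y' => p x y' t) y = 0) :
    ∀ t₁ t₂ : ℝ,
      (∫ q : ℝ × ℝ, ((deriv (fun y' => p q.1 y' t₁) q.2)^2
        + (deriv (fun s => deriv (fun x' => p x' q.2 s) q.1) t₁)^2
        + (deriv (fun s => deriv (fun y' => p q.1 y' s) q.2) t₁)^2))
      = ∫ q : ℝ × ℝ, ((deriv (fun y' => p q.1 y' t₂) q.2)^2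
        + (deriv (fun s => deriv (fun x' => p x' q.2 s) q.1) t₂)^2
        + (deriv (fun s => deriv (fun y' => p q.1 y' s) q.2) t₂)^2) := by
  set P : ℝ × ℝ × ℝ → ℝ := fun q => p q.1 q.2.1 q.2.2 with hPdef
  have hZP : ZK K P := by
    intro q hq
    show p q.1 q.2.1 q.2.2 = 0
    by_contra h
    exact hq (hsupp q.2.2 h)
  -- second spatial derivatives expressed through `pd`
  have hx2 : ∀ x y s : ℝ, iteratedDeriv 2 (fun x' => p x' y s) x
      = pd (1,0,0) (pd (1,0,0) P) (x,y,s) := by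
    intro x y s
    rw [iterDeriv_two]
    have e : deriv (fun x' => p x' y s) = fun u => pd (1,0,0) P (u,y,s) :=
      funext fun u => (hasDerivAt_x hsm u y s).deriv
    rw [e]
    exact (hasDerivAt_x (pd_contDiff hsm _) x y s).deriv
  have hy2 : ∀ x y s : ℝ, iteratedDeriv 2 (fun y' => p x y' s) y
      = pd (0,1,0) (pd (0,1,0) P) (x,y,s) := by
    intro x y s
    rw [iterDeriv_two]
    have e : deriv (fun y' => p x y' s) = fun u => pd (0,1,0) P (x,u,s) :=
      funext fun u => (hasDerivAt_y hsm x u s).deriv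
    rw [e]
    exact (hasDerivAt_y (pd_contDiff hsm _) x y s).deriv
  -- translate the PDE
  have hPDE : ∀ z : ℝ × ℝ × ℝ, pd (0,1,0) (pd (0,1,0) P) z
      + (pd (0,0,1) (pd (0,0,1) (pd (1,0,0) (pd (1,0,0) P))) z
        + pd (0,0,1) (pd (0,0,1) (pd (0,1,0) (pd (0,1,0) P))) z) = 0 := by
    rintro ⟨x, y, t⟩
    have h0 := hpde x y t
    have hfun : (fun s => iteratedDeriv 2 (fun x' => p x' y s) x
        + iteratedDeriv 2 (fun y' => p x y' s) y)
        = fun s => (fun z => pd (1,0,0) (pd (1,0,0) P) z + pd (0,1,0) (pd (0,1,0) P) z)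
            (x,y,s) :=
      funext fun s => by rw [hx2 x y s, hy2 x y s]
    rw [hfun, hy2 x y t] at h0
    have hAsm : ContDiff ℝ (⊤ : ℕ∞) (fun z => pd (1,0,0) (pd (1,0,0) P) z
        + pd (0,1,0) (pd (0,1,0) P) z) :=
      (pd_contDiff (pd_contDiff hsm _) _).add (pd_contDiff (pd_contDiff hsm _) _)
    have ht2 : iteratedDeriv 2 (fun s => (fun z => pd (1,0,0) (pd (1,0,0) P) z
        + pd (0,1,0) (pd (0,1,0) P) z) (x,y,s)) t
        = pd (0,0,1) (pd (0,0,1) (fun z => pd (1,0,0) (pd (1,0,0) P) z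
            + pd (0,1,0) (pd (0,1,0) P) z)) (x,y,t) := by
      rw [iterDeriv_two]
      have e : deriv (fun s => (fun z => pd (1,0,0) (pd (1,0,0) P) z
          + pd (0,1,0) (pd (0,1,0) P) z) (x,y,s))
          = fun u => pd (0,0,1) (fun z => pd (1,0,0) (pd (1,0,0) P) z
              + pd (0,1,0) (pd (0,1,0) P) z) (x,y,u) :=
        funext fun u => (hasDerivAt_t hAsm x y u).deriv
      rw [e]
      exact (hasDerivAt_t (pd_contDiff hAsm _) x y t).deriv
    rw [ht2] at h0
    have hsplit3 : pd (0,0,1) (pd (0,0,1) (fun z => pd (1,0,0) (pd (1,0,0) P) z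
        + pd (0,1,0) (pd (0,1,0) P) z)) (x,y,t)
        = pd (0,0,1) (pd (0,0,1) (pd (1,0,0) (pd (1,0,0) P))) (x,y,t)
          + pd (0,0,1) (pd (0,0,1) (pd (0,1,0) (pd (0,1,0) P))) (x,y,t) := by
      have e : pd (0,0,1) (fun z => pd (1,0,0) (pd (1,0,0) P) z
          + pd (0,1,0) (pd (0,1,0) P) z)
          = fun z => pd (0,0,1) (pd (1,0,0) (pd (1,0,0) P)) z
            + pd (0,0,1) (pd (0,1,0) (pd (0,1,0) P)) z :=
        funext fun z' => pd_add (pd_contDiff (pd_contDiff hsm _) _)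
          (pd_contDiff (pd_contDiff hsm _) _) _ z'
      rw [e]
      exact pd_add (pd_contDiff (pd_contDiff (pd_contDiff hsm _) _) _)
        (pd_contDiff (pd_contDiff (pd_contDiff hsm _) _) _) _ (x,y,t)
    rw [hsplit3] at h0
    linarith
  -- energy is constant
  have hE : ∀ t₀ : ℝ, HasDerivAt (fun t => ∫ q : ℝ × ℝ, ((pd (0,1,0) P (q.1,q.2,t))^2
      + (pd (0,0,1) (pd (1,0,0) P) (q.1,q.2,t))^2
      + (pd (0,0,1) (pd (0,1,0) P) (q.1,q.2,t))^2)) 0 t₀ := by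
    intro t₀
    have h := hasDerivAt_E hsm hZP hK t₀
    rwa [integral_G_zero hsm hZP hK hPDE t₀] at h
  have hconst := is_const_of_deriv_eq_zero (𝕜 := ℝ)
    (f := fun t => ∫ q : ℝ × ℝ, ((pd (0,1,0) P (q.1,q.2,t))^2
      + (pd (0,0,1) (pd (1,0,0) P) (q.1,q.2,t))^2
      + (pd (0,0,1) (pd (0,1,0) P) (q.1,q.2,t))^2))
    (fun t => (hE t).differentiableAt) (fun t => (hE t).deriv)
  -- identify the statement's integrand
  intro t₁ t₂
  have hcomp : ∀ t : ℝ, (fun q : ℝ × ℝ => ((deriv (fun y' => p q.1 y' t) q.2)^2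
      + (deriv (fun s => deriv (fun x' => p x' q.2 s) q.1) t)^2
      + (deriv (fun s => deriv (fun y' => p q.1 y' s) q.2) t)^2))
      = fun q : ℝ × ℝ => ((pd (0,1,0) P (q.1,q.2,t))^2
      + (pd (0,0,1) (pd (1,0,0) P) (q.1,q.2,t))^2
      + (pd (0,0,1) (pd (0,1,0) P) (q.1,q.2,t))^2) := by
    intro t
    funext q
    have h1 : deriv (fun y' => p q.1 y' t) q.2 = pd (0,1,0) P (q.1,q.2,t) :=
      (hasDerivAt_y hsm q.1 q.2 t).deriv
    have h2 : deriv (fun s => deriv (fun x' => p x' q.2 s) q.1) t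
        = pd (0,0,1) (pd (1,0,0) P) (q.1,q.2,t) := by
      have e : (fun s => deriv (fun x' => p x' q.2 s) q.1)
          = fun s => pd (1,0,0) P (q.1,q.2,s) :=
        funext fun s => (hasDerivAt_x hsm q.1 q.2 s).deriv
      rw [e]
      exact (hasDerivAt_t (pd_contDiff hsm _) q.1 q.2 t).deriv
    have h3 : deriv (fun s => deriv (fun y' => p q.1 y' s) q.2) t
        = pd (0,0,1) (pd (0,1,0) P) (q.1,q.2,t) := by
      have e : (fun s => deriv (fun y' => p q.1 y' s) q.2)
          = fun s => pd (0,1,0) P (q.1,q.2,s) :=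
        funext fun s => (hasDerivAt_y hsm q.1 q.2 s).deriv
      rw [e]
      exact (hasDerivAt_t (pd_contDiff hsm _) q.1 q.2 t).deriv
    rw [h1, h2, h3]
  rw [show (∫ q : ℝ × ℝ, ((deriv (fun y' => p q.1 y' t₁) q.2)^2
      + (deriv (fun s => deriv (fun x' => p x' q.2 s) q.1) t₁)^2
      + (deriv (fun s => deriv (fun y' => p q.1 y' s) q.2) t₁)^2))
    = ∫ q : ℝ × ℝ, ((pd (0,1,0) P (q.1,q.2,t₁))^2
      + (pd (0,0,1) (pd (1,0,0) P) (q.1,q.2,t₁))^2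
      + (pd (0,0,1) (pd (0,1,0) P) (q.1,q.2,t₁))^2) from by rw [hcomp t₁]]
  rw [show (∫ q : ℝ × ℝ, ((deriv (fun y' => p q.1 y' t₂) q.2)^2
      + (deriv (fun s => deriv (fun x' => p x' q.2 s) q.1) t₂)^2
      + (deriv (fun s => deriv (fun y' => p q.1 y' s) q.2) t₂)^2))
    = ∫ q : ℝ × ℝ, ((pd (0,1,0) P (q.1,q.2,t₂))^2
      + (pd (0,0,1) (pd (1,0,0) P) (q.1,q.2,t₂))^2
      + (pd (0,0,1) (pd (0,1,0) P) (q.1,q.2,t₂))^2) from by rw [hcomp t₂]]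
  exact hconst t₁ t₂
end

section
/- Let 1 < l₁ < l₂ be real numbers, let k be a positive integer, and let x be a real number with l₁^{−(k+1)} ≤ x ≤ l₁^{−k}. Then the number of positive integers m such that l₁ ≤ x^{−1/m} ≤ l₂ is at most k·(1 − log l₁ / log l₂) + 2. -/
/-!
With `L = -log x`, the inequalities `l₁ ≤ x^(-1/m) = exp (L/m) ≤ l₂` say exactly that
`L / log l₂ ≤ m ≤ L / log l₁`. An interval of length `D` contains at most `D + 1` integers, and
the lower bound on `x` gives `L ≤ (k+1) log l₁`, so the length `L/log l₁ - L/log l₂` is at most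
`(k+1)(1 - log l₁ / log l₂)`.
-/

open Real Set

lemma setOf_natCast_mem_Icc_subset (A B : ℝ) :
    {m : ℕ | (m : ℝ) ∈ Icc A B} ⊆ Icc ⌈A⌉₊ ⌊B⌋₊ :=
  fun _ hm ↦ ⟨Nat.ceil_le.mpr hm.1, Nat.le_floor hm.2⟩

lemma finite_setOf_natCast_mem_Icc (A B : ℝ) : {m : ℕ | (m : ℝ) ∈ Icc A B}.Finite :=
  (finite_Icc _ _).subset (setOf_natCast_mem_Icc_subset A B)

lemma ncard_setOf_natCast_mem_Icc_le (A B : ℝ) :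
    ({m : ℕ | (m : ℝ) ∈ Icc A B}.ncard : ℝ) ≤ max 0 (B - A + 1) := by
  rcases lt_or_ge B 0 with hB | hB
  · have hempty : {m : ℕ | (m : ℝ) ∈ Icc A B} = ∅ :=
      eq_empty_of_forall_notMem fun m hm ↦ (hm.2.trans_lt hB).not_ge m.cast_nonneg
    rw [hempty, ncard_empty, Nat.cast_zero]
    exact le_max_left _ _
  have hcard : {m : ℕ | (m : ℝ) ∈ Icc A B}.ncard ≤ ⌊B⌋₊ + 1 - ⌈A⌉₊ := by
    calc _ ≤ (Icc ⌈A⌉₊ ⌊B⌋₊).ncard :=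
          ncard_le_ncard (setOf_natCast_mem_Icc_subset A B) (finite_Icc _ _)
      _ = ⌊B⌋₊ + 1 - ⌈A⌉₊ := by rw [← Finset.coe_Icc, ncard_coe_finset, Nat.card_Icc]
  rcases le_or_gt ⌈A⌉₊ (⌊B⌋₊ + 1) with h | h
  · refine le_max_of_le_right ?_
    calc _ ≤ ((⌊B⌋₊ + 1 - ⌈A⌉₊ : ℕ) : ℝ) := by exact_mod_cast hcard
      _ = ⌊B⌋₊ + 1 - ⌈A⌉₊ := by push_cast [Nat.cast_sub h]; ring
      _ ≤ B - A + 1 := by linarith [Nat.floor_le hB, Nat.le_ceil A]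
  · refine le_max_of_le_left ?_
    exact_mod_cast hcard.trans (Nat.sub_eq_zero_of_le h.le).le

lemma rpow_neg_one_div_eq_exp {x : ℝ} (hx : 0 < x) (m : ℝ) :
    x ^ (-1 / m) = exp (-log x / m) := by
  rw [rpow_def_of_pos hx]; ring_nf

lemma le_rpow_neg_one_div_iff {x a m : ℝ} (hx : 0 < x) (ha : 1 < a) (hm : 0 < m) :
    a ≤ x ^ (-1 / m) ↔ m ≤ -log x / log a := by
  rw [rpow_neg_one_div_eq_exp hx, ← log_le_iff_le_exp (by linarith), le_div_iff₀ hm,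
    le_div_iff₀ (log_pos ha), mul_comm]

lemma rpow_neg_one_div_le_iff {x b m : ℝ} (hx : 0 < x) (hb : 1 < b) (hm : 0 < m) :
    x ^ (-1 / m) ≤ b ↔ -log x / log b ≤ m := by
  rw [rpow_neg_one_div_eq_exp hx, ← le_log_iff_exp_le (by linarith), div_le_iff₀ hm,
    div_le_iff₀ (log_pos hb), mul_comm]

lemma div_sub_div_add_one_le {a b L t : ℝ} (ha : 0 < a) (hab : a ≤ b) (hL : L ≤ (t + 1) * a) :
    L / a - L / b + 1 ≤ t * (1 - a / b) + 2 := by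
  have hb : 0 < b := ha.trans_le hab
  have hr : 0 ≤ a / b := by positivity
  have hr1 : a / b ≤ 1 := (div_le_one hb).mpr hab
  have hLa : L / a ≤ t + 1 := (div_le_iff₀ ha).mpr hL
  have hsplit : L / a - L / b = L / a * (1 - a / b) := by field_simp
  nlinarith

theorem statement_16_general (l₁ l₂ : ℝ) (h1 : 1 < l₁) (h12 : l₁ < l₂) (k : ℕ)
    (x : ℝ) (hx1 : l₁^(-((k:ℤ)+1)) ≤ x) :
    {m : ℕ | 0 < m ∧ l₁ ≤ x ^ (-(1:ℝ)/(m:ℝ)) ∧ x ^ (-(1:ℝ)/(m:ℝ)) ≤ l₂}.Finite ∧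
    (({m : ℕ | 0 < m ∧ l₁ ≤ x ^ (-(1:ℝ)/(m:ℝ)) ∧ x ^ (-(1:ℝ)/(m:ℝ)) ≤ l₂}.ncard : ℝ)
      ≤ k * (1 - Real.log l₁ / Real.log l₂) + 2) := by
  have hx : 0 < x := (zpow_pos (by linarith) _).trans_le hx1
  have hl₂ : 1 < l₂ := h1.trans h12
  set S := {m : ℕ | 0 < m ∧ l₁ ≤ x ^ (-(1:ℝ)/(m:ℝ)) ∧ x ^ (-(1:ℝ)/(m:ℝ)) ≤ l₂}
  have hS : S ⊆ {m : ℕ | (m : ℝ) ∈ Icc (-log x / log l₂) (-log x / log l₁)} := by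
    rintro m ⟨hm₀, hl, hu⟩
    have hm : (0 : ℝ) < m := Nat.cast_pos.mpr hm₀
    exact ⟨(rpow_neg_one_div_le_iff hx hl₂ hm).mp hu, (le_rpow_neg_one_div_iff hx h1 hm).mp hl⟩
  have hL : -log x ≤ (k + 1) * log l₁ := by
    have := log_le_log (zpow_pos (by linarith) _) hx1
    rw [log_zpow] at this
    push_cast at this
    linarith
  have hlog : log l₁ ≤ log l₂ := log_le_log (by linarith) h12.le
  have hratio : log l₁ / log l₂ ≤ 1 := (div_le_one (log_pos hl₂)).mpr hlog
  refine ⟨(finite_setOf_natCast_mem_Icc _ _).subset hS, ?_⟩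
  calc (S.ncard : ℝ) ≤ _ := by
        exact_mod_cast ncard_le_ncard hS (finite_setOf_natCast_mem_Icc _ _)
    _ ≤ max 0 _ := ncard_setOf_natCast_mem_Icc_le _ _
    _ ≤ k * (1 - log l₁ / log l₂) + 2 := by
        refine max_le (by nlinarith [k.cast_nonneg (α := ℝ)]) ?_
        exact div_sub_div_add_one_le (log_pos h1) hlog hL

/-- For `1 < l₁ < l₂`, a positive integer `k`, and `x ∈ [l₁^{−(k+1)}, l₁^{−k}]`, the set of
positive integers `m` with `l₁ ≤ x^{−1/m} ≤ l₂` is finite and has at most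
`k·(1 − log l₁ / log l₂) + 2` elements. -/
theorem statement_16 (l₁ l₂ : ℝ) (h1 : 1 < l₁) (h12 : l₁ < l₂) (k : ℕ) (hk : 0 < k)
    (x : ℝ) (hx1 : l₁^(-((k:ℤ)+1)) ≤ x) (hx2 : x ≤ l₁^(-(k:ℤ))) :
    {m : ℕ | 0 < m ∧ l₁ ≤ x ^ (-(1:ℝ)/(m:ℝ)) ∧ x ^ (-(1:ℝ)/(m:ℝ)) ≤ l₂}.Finite ∧
    (({m : ℕ | 0 < m ∧ l₁ ≤ x ^ (-(1:ℝ)/(m:ℝ)) ∧ x ^ (-(1:ℝ)/(m:ℝ)) ≤ l₂}.ncard : ℝ)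
      ≤ k * (1 - Real.log l₁ / Real.log l₂) + 2) :=
  statement_16_general l₁ l₂ h1 h12 k x hx1
end

section
/- Let D ⊂ ℝ² be an open set, 0 < λ₁ < λ₂ < 1, and let u : D × [λ₁, λ₂] → ℝ be continuous, twice continuously differentiable in (x,y) with all these partial derivatives jointly continuous in (x,y,λ), and suppose that for every (x,y) ∈ D and λ ∈ [λ₁, λ₂]: λ·( ∂²u/∂x² + ∂²u/∂y² )(x,y,λ) = ∂²u/∂y²(x,y,λ). Let σ : [λ₁, λ₂] → ℝ be continuous. Then the function p(x,y,t) := ∫_{λ₁}^{λ₂} cos(√λ · t)·σ(λ)·u(x,y,λ) dλ is a classical solution of the Poincaré–Sobolev equation on D × ℝ: ∂²/∂t² ( ∂²p/∂x² + ∂²p/∂y² ) + ∂²p/∂y² = 0. -/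
/-!
Since `∂ₜ² cos (√λ t) = -λ cos (√λ t)`, the spectral equation `λ Δu = u_yy` says exactly that
each mode `cos (√λ t) σ(λ) u(·, ·, λ)` solves `∂ₜ² Δp + p_yy = 0`. The joint continuity in
`(x, y, λ)` of `u` and of its derivatives gives bounds that are uniform on compact neighbourhoods
times the compact interval `[λ₁, λ₂]`, so dominated convergence allows differentiating twice under
the integral sign in `x`, in `y` and in `t`; the superposition then inherits the equation from its
modes.
-/

open MeasureTheory Set Metric Function Filter Topology Real
open scoped Interval

section ParametricIntervalIntegral

variable {E : Type*} [NormedAddCommGroup E] [NormedSpace ℝ E] {U : Set ℝ} {a b : ℝ}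

theorem hasDerivAt_intervalIntegral_of_continuousOn (hU : IsOpen U) (hab : a ≤ b)
    {F F' : ℝ → ℝ → E}
    (hF : ContinuousOn (uncurry F) (U ×ˢ Icc a b))
    (hF' : ContinuousOn (uncurry F') (U ×ˢ Icc a b))
    (hd : ∀ x ∈ U, ∀ l ∈ Icc a b, HasDerivAt (F · l) (F' x l) x)
    {x₀ : ℝ} (hx₀ : x₀ ∈ U) :
    HasDerivAt (fun x => ∫ l in a..b, F x l) (∫ l in a..b, F' x₀ l) x₀ := by
  obtain ⟨r, hr, hrU⟩ := nhds_basis_closedBall.mem_iff.1 (hU.mem_nhds hx₀)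
  have hΙ : Ι a b ⊆ Icc a b := by rw [uIoc_of_le hab]; exact Ioc_subset_Icc_self
  obtain ⟨C, hC⟩ := 
    ((isCompact_closedBall x₀ r).prod isCompact_Icc).exists_bound_of_continuousOn
      (hF'.mono (prod_mono hrU subset_rfl))
  refine (intervalIntegral.hasDerivAt_integral_of_dominated_loc_of_deriv_le (bound := fun _ => C)
    (ball_mem_nhds x₀ hr) ?_
    ((ContinuousOn.uncurry_left x₀ hx₀ hF).intervalIntegrable_of_Icc hab)
    (((ContinuousOn.uncurry_left x₀ hx₀ hF').mono hΙ).aestronglyMeasurable measurableSet_uIoc)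
    ?_ intervalIntegrable_const ?_).2
  · filter_upwards [hU.mem_nhds hx₀] with x hx
    exact ((ContinuousOn.uncurry_left x hx hF).mono hΙ).aestronglyMeasurable measurableSet_uIoc
  · exact .of_forall fun l hl x hx => hC (x, l) ⟨ball_subset_closedBall hx, hΙ hl⟩
  · exact .of_forall fun l hl x hx => hd x (hrU (ball_subset_closedBall hx)) l (hΙ hl)

theorem iteratedDeriv_two_intervalIntegral_of_continuousOn (hU : IsOpen U) (hab : a ≤ b)
    {F F' F'' : ℝ → ℝ → E}
    (hF : ContinuousOn (uncurry F) (U ×ˢ Icc a b))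
    (hF' : ContinuousOn (uncurry F') (U ×ˢ Icc a b))
    (hF'' : ContinuousOn (uncurry F'') (U ×ˢ Icc a b))
    (hd : ∀ x ∈ U, ∀ l ∈ Icc a b, HasDerivAt (F · l) (F' x l) x)
    (hd' : ∀ x ∈ U, ∀ l ∈ Icc a b, HasDerivAt (F' · l) (F'' x l) x)
    {x₀ : ℝ} (hx₀ : x₀ ∈ U) :
    iteratedDeriv 2 (fun x => ∫ l in a..b, F x l) x₀ = ∫ l in a..b, F'' x₀ l := by
  have hderiv :
      deriv (fun x => ∫ l in a..b, F x l) =ᶠ[𝓝 x₀] fun x => ∫ l in a..b, F' x l :=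
    eventually_of_mem (hU.mem_nhds hx₀) fun x hx =>
      (hasDerivAt_intervalIntegral_of_continuousOn hU hab hF hF' hd hx).deriv
  rw [iteratedDeriv_succ, iteratedDeriv_one, hderiv.deriv_eq]
  exact (hasDerivAt_intervalIntegral_of_continuousOn hU hab hF' hF'' hd' hx₀).deriv

end ParametricIntervalIntegral

theorem ContDiffOn.hasDerivAt_deriv_of_isOpen {E : Type*} [NormedAddCommGroup E]
    [NormedSpace ℝ E] {f : ℝ → E} {U : Set ℝ} (hf : ContDiffOn ℝ 2 f U) (hU : IsOpen U)
    {x : ℝ} (hx : x ∈ U) :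
    HasDerivAt (deriv f) (iteratedDeriv 2 f x) x := by
  rw [iteratedDeriv_succ, iteratedDeriv_one]
  exact (((hf.deriv_of_isOpen hU (by norm_num)).differentiableOn one_ne_zero).differentiableAt
    (hU.mem_nhds hx)).hasDerivAt

theorem iteratedDeriv_two_intervalIntegral_const_mul {U : Set ℝ} (hU : IsOpen U) {a b : ℝ}
    (hab : a ≤ b) {c : ℝ → ℝ} {g : ℝ → ℝ → ℝ} (hc : ContinuousOn c (Icc a b))
    (hg : ContinuousOn (uncurry g) (U ×ˢ Icc a b))
    (hg' : ContinuousOn (fun q : ℝ × ℝ => deriv (g · q.2) q.1) (U ×ˢ Icc a b))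
    (hg'' : ContinuousOn (fun q : ℝ × ℝ => iteratedDeriv 2 (g · q.2) q.1) (U ×ˢ Icc a b))
    (hC2 : ∀ l ∈ Icc a b, ContDiffOn ℝ 2 (g · l) U) {x₀ : ℝ} (hx₀ : x₀ ∈ U) :
    iteratedDeriv 2 (fun x => ∫ l in a..b, c l * g x l) x₀
      = ∫ l in a..b, c l * iteratedDeriv 2 (g · l) x₀ := by
  have hc' : ContinuousOn (fun q : ℝ × ℝ => c q.2) (U ×ˢ Icc a b) :=
    hc.comp continuous_snd.continuousOn fun _ hq => hq.2
  refine iteratedDeriv_two_intervalIntegral_of_continuousOn (F := fun x l => c l * g x l)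
    (F' := fun x l => c l * deriv (g · l) x) (F'' := fun x l => c l * iteratedDeriv 2 (g · l) x)
    hU hab (hc'.mul hg) (hc'.mul hg') (hc'.mul hg'') (fun x hx l hl => ?_) (fun x hx l hl => ?_)
    hx₀
  · exact ((((hC2 l hl).differentiableOn (by norm_num)).differentiableAt
      (hU.mem_nhds hx)).hasDerivAt).const_mul (c l)
  · exact ((hC2 l hl).hasDerivAt_deriv_of_isOpen hU hx).const_mul (c l)

theorem iteratedDeriv_two_intervalIntegral_cos_sqrt_mul {a b : ℝ} (ha : 0 ≤ a) (hab : a ≤ b)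
    {c : ℝ → ℝ} (hc : ContinuousOn c (Icc a b)) (t : ℝ) :
    iteratedDeriv 2 (fun s => ∫ l in a..b, cos (√l * s) * c l) t
      = -∫ l in a..b, l * (cos (√l * t) * c l) := by
  have hc' : ContinuousOn (fun q : ℝ × ℝ => c q.2) (univ ×ˢ Icc a b) :=
    hc.comp continuous_snd.continuousOn fun _ hq => hq.2
  have hcos (k s : ℝ) : HasDerivAt (fun s => cos (k * s)) (-(k * sin (k * s))) s := by
    simpa [mul_comm] using ((hasDerivAt_id s).const_mul k).cos
  have hsin (k s : ℝ) :
      HasDerivAt (fun s => -(k * sin (k * s))) (-(k * (k * cos (k * s)))) s := by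
    simpa [mul_comm] using (((hasDerivAt_id s).const_mul k).sin.const_mul k).fun_neg
  rw [iteratedDeriv_two_intervalIntegral_of_continuousOn (F := fun s l => cos (√l * s) * c l)
    (F' := fun s l => -(√l * sin (√l * s)) * c l)
    (F'' := fun s l => -(√l * (√l * cos (√l * s))) * c l) isOpen_univ hab
    ((Continuous.continuousOn (by fun_prop)).mul hc')
    ((Continuous.continuousOn (by fun_prop)).mul hc')
    ((Continuous.continuousOn (by fun_prop)).mul hc') (fun s _ l _ => (hcos √l s).mul_const (c l))
    (fun s _ l _ => (hsin √l s).mul_const (c l)) (mem_univ t), ← intervalIntegral.integral_neg]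
  refine intervalIntegral.integral_congr fun l hl => ?_
  rw [uIcc_of_le hab] at hl
  have hsq : √l * √l = l := mul_self_sqrt (ha.trans hl.1)
  linear_combination (-(cos (√l * t) * c l)) * hsq

section Slices

variable {D : Set (ℝ × ℝ)} {a b : ℝ} {c : ℝ → ℝ} {u : ℝ → ℝ → ℝ → ℝ}

theorem iteratedDeriv_two_intervalIntegral_mul_fst (hD : IsOpen D) (hab : a ≤ b)
    (hc : ContinuousOn c (Icc a b))
    (hu : ContinuousOn (fun q : (ℝ × ℝ) × ℝ => u q.1.1 q.1.2 q.2) (D ×ˢ Icc a b))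
    (hC2 : ∀ l ∈ Icc a b, ContDiffOn ℝ 2 (fun q : ℝ × ℝ => u q.1 q.2 l) D)
    (hux : ContinuousOn (fun q : (ℝ × ℝ) × ℝ => deriv (fun x' => u x' q.1.2 q.2) q.1.1)
      (D ×ˢ Icc a b))
    (huxx : ContinuousOn (fun q : (ℝ × ℝ) × ℝ =>
      iteratedDeriv 2 (fun x' => u x' q.1.2 q.2) q.1.1) (D ×ˢ Icc a b))
    {x y : ℝ} (hxy : (x, y) ∈ D) :
    iteratedDeriv 2 (fun x' => ∫ l in a..b, c l * u x' y l) x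
      = ∫ l in a..b, c l * iteratedDeriv 2 (fun x' => u x' y l) x := by
  have hline : Continuous fun q : ℝ × ℝ => ((q.1, y), q.2) := by fun_prop
  have hmaps : MapsTo (fun q : ℝ × ℝ => ((q.1, y), q.2)) (((·, y) ⁻¹' D) ×ˢ Icc a b)
      (D ×ˢ Icc a b) := fun _ hq => hq
  have hu_line : ContinuousOn (uncurry fun x' l => u x' y l) (((·, y) ⁻¹' D) ×ˢ Icc a b) :=
    hu.comp hline.continuousOn hmaps
  have hux_line : ContinuousOn (fun q : ℝ × ℝ => deriv (fun x' => u x' y q.2) q.1)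
      (((·, y) ⁻¹' D) ×ˢ Icc a b) :=
    hux.comp hline.continuousOn hmaps
  -- `congr` spares the elaborator a costly unfolding of `iteratedDeriv` in a defeq check
  have huxx_line : ContinuousOn (fun q : ℝ × ℝ => iteratedDeriv 2 (fun x' => u x' y q.2) q.1)
      (((·, y) ⁻¹' D) ×ˢ Icc a b) :=
    (huxx.comp hline.continuousOn hmaps).congr fun _ _ => rfl
  have hC2_line : ∀ l ∈ Icc a b, ContDiffOn ℝ 2 (fun x' => u x' y l) ((·, y) ⁻¹' D) :=
    fun l hl => (hC2 l hl).comp (by fun_prop : ContDiff ℝ 2 fun x' : ℝ => (x', y)).contDiffOn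
      fun _ h => h
  exact iteratedDeriv_two_intervalIntegral_const_mul (g := fun x' l => u x' y l)
    (hD.preimage (by fun_prop)) hab hc hu_line hux_line huxx_line hC2_line hxy

theorem iteratedDeriv_two_intervalIntegral_mul_snd (hD : IsOpen D) (hab : a ≤ b)
    (hc : ContinuousOn c (Icc a b))
    (hu : ContinuousOn (fun q : (ℝ × ℝ) × ℝ => u q.1.1 q.1.2 q.2) (D ×ˢ Icc a b))
    (hC2 : ∀ l ∈ Icc a b, ContDiffOn ℝ 2 (fun q : ℝ × ℝ => u q.1 q.2 l) D)
    (huy : ContinuousOn (fun q : (ℝ × ℝ) × ℝ => deriv (fun y' => u q.1.1 y' q.2) q.1.2)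
      (D ×ˢ Icc a b))
    (huyy : ContinuousOn (fun q : (ℝ × ℝ) × ℝ =>
      iteratedDeriv 2 (fun y' => u q.1.1 y' q.2) q.1.2) (D ×ˢ Icc a b))
    {x y : ℝ} (hxy : (x, y) ∈ D) :
    iteratedDeriv 2 (fun y' => ∫ l in a..b, c l * u x y' l) y
      = ∫ l in a..b, c l * iteratedDeriv 2 (fun y' => u x y' l) y := by
  have hline : Continuous fun q : ℝ × ℝ => ((x, q.1), q.2) := by fun_prop
  have hmaps : MapsTo (fun q : ℝ × ℝ => ((x, q.1), q.2)) (((x, ·) ⁻¹' D) ×ˢ Icc a b)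
      (D ×ˢ Icc a b) := fun _ hq => hq
  have hu_line : ContinuousOn (uncurry fun y' l => u x y' l) (((x, ·) ⁻¹' D) ×ˢ Icc a b) :=
    hu.comp hline.continuousOn hmaps
  have huy_line : ContinuousOn (fun q : ℝ × ℝ => deriv (fun y' => u x y' q.2) q.1)
      (((x, ·) ⁻¹' D) ×ˢ Icc a b) :=
    huy.comp hline.continuousOn hmaps
  have huyy_line : ContinuousOn (fun q : ℝ × ℝ => iteratedDeriv 2 (fun y' => u x y' q.2) q.1)
      (((x, ·) ⁻¹' D) ×ˢ Icc a b) :=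
    (huyy.comp hline.continuousOn hmaps).congr fun _ _ => rfl
  have hC2_line : ∀ l ∈ Icc a b, ContDiffOn ℝ 2 (fun y' => u x y' l) ((x, ·) ⁻¹' D) :=
    fun l hl => (hC2 l hl).comp (by fun_prop : ContDiff ℝ 2 fun y' : ℝ => (x, y')).contDiffOn
      fun _ h => h
  exact iteratedDeriv_two_intervalIntegral_const_mul (g := fun y' l => u x y' l)
    (hD.preimage (by fun_prop)) hab hc hu_line huy_line huyy_line hC2_line hxy

end Slices

theorem statement_19_general (D : Set (ℝ × ℝ)) (hD : IsOpen D)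
    (lam₁ lam₂ : ℝ) (h1 : 0 < lam₁) (h2 : lam₁ < lam₂)
    (u : ℝ → ℝ → ℝ → ℝ)
    (hcont : ContinuousOn (fun q : (ℝ × ℝ) × ℝ => u q.1.1 q.1.2 q.2)
      (D ×ˢ Set.Icc lam₁ lam₂))
    (hC2 : ∀ l ∈ Set.Icc lam₁ lam₂, ContDiffOn ℝ 2 (fun q : ℝ × ℝ => u q.1 q.2 l) D)
    (hux : ContinuousOn (fun q : (ℝ × ℝ) × ℝ => deriv (fun x' => u x' q.1.2 q.2) q.1.1)
      (D ×ˢ Set.Icc lam₁ lam₂))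
    (huy : ContinuousOn (fun q : (ℝ × ℝ) × ℝ => deriv (fun y' => u q.1.1 y' q.2) q.1.2)
      (D ×ˢ Set.Icc lam₁ lam₂))
    (huxx : ContinuousOn (fun q : (ℝ × ℝ) × ℝ =>
        iteratedDeriv 2 (fun x' => u x' q.1.2 q.2) q.1.1) (D ×ˢ Set.Icc lam₁ lam₂))
    (huyy : ContinuousOn (fun q : (ℝ × ℝ) × ℝ =>
        iteratedDeriv 2 (fun y' => u q.1.1 y' q.2) q.1.2) (D ×ˢ Set.Icc lam₁ lam₂))
    (hspec : ∀ q ∈ D, ∀ l ∈ Set.Icc lam₁ lam₂,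
      l * (iteratedDeriv 2 (fun x' => u x' q.2 l) q.1
          + iteratedDeriv 2 (fun y' => u q.1 y' l) q.2)
        = iteratedDeriv 2 (fun y' => u q.1 y' l) q.2)
    (σ : ℝ → ℝ) (hσ : ContinuousOn σ (Set.Icc lam₁ lam₂))
    (p : ℝ → ℝ → ℝ → ℝ)
    (hp : ∀ x y t : ℝ,
      p x y t = ∫ l in lam₁..lam₂, Real.cos (Real.sqrt l * t) * σ l * u x y l) :
    ∀ q ∈ D, ∀ t : ℝ,
      iteratedDeriv 2 (fun s =>
          iteratedDeriv 2 (fun x' => p x' q.2 s) q.1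
            + iteratedDeriv 2 (fun y' => p q.1 y' s) q.2) t
        + iteratedDeriv 2 (fun y' => p q.1 y' t) q.2 = 0 := by
  intro q hq t
  obtain ⟨x, y⟩ := q
  simp only [hp]
  have hab := h2.le
  have hcoef (s : ℝ) : ContinuousOn (fun l => cos (√l * s) * σ l) (Icc lam₁ lam₂) :=
    (Continuous.continuousOn (by fun_prop)).mul hσ
  have hpxx (s : ℝ) :=
    iteratedDeriv_two_intervalIntegral_mul_fst hD hab (hcoef s) hcont hC2 hux huxx hq
  have hpyy (s : ℝ) :=
    iteratedDeriv_two_intervalIntegral_mul_snd hD hab (hcoef s) hcont hC2 huy huyy hq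
  have hpoint : Continuous fun l : ℝ => ((x, y), l) := by fun_prop
  have huxx_at :
      ContinuousOn (fun l => iteratedDeriv 2 (fun x' => u x' y l) x) (Icc lam₁ lam₂) :=
    (huxx.comp hpoint.continuousOn fun _ hl => ⟨hq, hl⟩).congr fun _ _ => rfl
  have huyy_at :
      ContinuousOn (fun l => iteratedDeriv 2 (fun y' => u x y' l) y) (Icc lam₁ lam₂) :=
    (huyy.comp hpoint.continuousOn fun _ hl => ⟨hq, hl⟩).congr fun _ _ => rfl
  have hlap (s : ℝ) :
      iteratedDeriv 2 (fun x' => ∫ l in lam₁..lam₂, cos (√l * s) * σ l * u x' y l) x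
        + iteratedDeriv 2 (fun y' => ∫ l in lam₁..lam₂, cos (√l * s) * σ l * u x y' l) y
      = ∫ l in lam₁..lam₂, cos (√l * s) * (σ l * (iteratedDeriv 2 (fun x' => u x' y l) x
        + iteratedDeriv 2 (fun y' => u x y' l) y)) := by
    rw [hpxx, hpyy, ← intervalIntegral.integral_add
      (by exact ((hcoef s).mul huxx_at).intervalIntegrable_of_Icc hab)
      (by exact ((hcoef s).mul huyy_at).intervalIntegrable_of_Icc hab)]
    exact intervalIntegral.integral_congr fun l _ => by ring
  simp_rw [hlap]
  rw [iteratedDeriv_two_intervalIntegral_cos_sqrt_mul h1.le hab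
    (by exact hσ.mul (huxx_at.add huyy_at)), hpyy, neg_add_eq_zero]
  refine intervalIntegral.integral_congr fun l hl => ?_
  rw [uIcc_of_le hab] at hl
  linear_combination (cos (√l * t) * σ l) * hspec (x, y) hq l hl

/-- Superpositions `p(x,y,t) = ∫_{λ₁}^{λ₂} cos(√λ·t)·σ(λ)·u(x,y,λ) dλ` of solutions of the
spectral equation `λ·(u_xx + u_yy) = u_yy` (with `u` continuous, `C²` in `(x,y)` and with all
these partial derivatives jointly continuous in `(x,y,λ)`) are classical solutions of the
Poincaré–Sobolev equation `∂ₜ²(p_xx + p_yy) + p_yy = 0` on `D × ℝ`. -/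
theorem statement_19 (D : Set (ℝ × ℝ)) (hD : IsOpen D)
    (lam₁ lam₂ : ℝ) (h1 : 0 < lam₁) (h2 : lam₁ < lam₂) (h3 : lam₂ < 1)
    (u : ℝ → ℝ → ℝ → ℝ)
    (hcont : ContinuousOn (fun q : (ℝ × ℝ) × ℝ => u q.1.1 q.1.2 q.2)
      (D ×ˢ Set.Icc lam₁ lam₂))
    (hC2 : ∀ l ∈ Set.Icc lam₁ lam₂, ContDiffOn ℝ 2 (fun q : ℝ × ℝ => u q.1 q.2 l) D)
    (hux : ContinuousOn (fun q : (ℝ × ℝ) × ℝ => deriv (fun x' => u x' q.1.2 q.2) q.1.1)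
      (D ×ˢ Set.Icc lam₁ lam₂))
    (huy : ContinuousOn (fun q : (ℝ × ℝ) × ℝ => deriv (fun y' => u q.1.1 y' q.2) q.1.2)
      (D ×ˢ Set.Icc lam₁ lam₂))
    (huxx : ContinuousOn (fun q : (ℝ × ℝ) × ℝ =>
        iteratedDeriv 2 (fun x' => u x' q.1.2 q.2) q.1.1) (D ×ˢ Set.Icc lam₁ lam₂))
    (huxy : ContinuousOn (fun q : (ℝ × ℝ) × ℝ =>
        deriv (fun y' => deriv (fun x' => u x' y' q.2) q.1.1) q.1.2)
      (D ×ˢ Set.Icc lam₁ lam₂))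
    (huyy : ContinuousOn (fun q : (ℝ × ℝ) × ℝ =>
        iteratedDeriv 2 (fun y' => u q.1.1 y' q.2) q.1.2) (D ×ˢ Set.Icc lam₁ lam₂))
    (hspec : ∀ q ∈ D, ∀ l ∈ Set.Icc lam₁ lam₂,
      l * (iteratedDeriv 2 (fun x' => u x' q.2 l) q.1
          + iteratedDeriv 2 (fun y' => u q.1 y' l) q.2)
        = iteratedDeriv 2 (fun y' => u q.1 y' l) q.2)
    (σ : ℝ → ℝ) (hσ : ContinuousOn σ (Set.Icc lam₁ lam₂))
    (p : ℝ → ℝ → ℝ → ℝ)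
    (hp : ∀ x y t : ℝ,
      p x y t = ∫ l in lam₁..lam₂, Real.cos (Real.sqrt l * t) * σ l * u x y l) :
    ∀ q ∈ D, ∀ t : ℝ,
      iteratedDeriv 2 (fun s =>
          iteratedDeriv 2 (fun x' => p x' q.2 s) q.1
            + iteratedDeriv 2 (fun y' => p q.1 y' s) q.2) t
        + iteratedDeriv 2 (fun y' => p q.1 y' t) q.2 = 0 :=
  statement_19_general D hD lam₁ lam₂ h1 h2 u hcont hC2 hux huy huxx huyy hspec σ hσ p hp
end
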